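/- arXiv:2102.09330 — 5 statements merged into one kernel-verified Lean document; each statement's English description precedes it below -/
import Mathlib

section
/- Let p be an odd prime dividing m-2, and let F_m(x) = a_1 P_m(x_1) + ... + a_n P_m(x_n) be a primitive m-gonal form (gcd(a_1,...,a_n)=1). Then F_m is universal over ℤ_p: every p-adic integer N is represented by F_m with x_1,...,x_n ∈ ℤ_p. -/
/-!
Primitivity gives an index `j` with `p ∤ aⱼ`; put `xᵢ = 0` for `i ≠ j`. The remaining equation
`2N = aⱼ(m-2)·z² + aⱼ(4-m)·z` is a quadratic whose leading coefficient lies in `pℤ_p` and whose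
linear coefficient is a unit (`4 - m ≡ 2` mod `p` and `p` is odd). Its reduction mod `p` is
linear with a simple root, which Hensel's lemma lifts to `ℤ_p`.
-/

theorem Finset.exists_not_dvd_of_gcd_eq_one {ι α : Type*} [CommMonoidWithZero α]
    [NormalizedGCDMonoid α] {s : Finset ι} {f : ι → α} (h : s.gcd f = 1) {q : α}
    (hq : ¬IsUnit q) : ∃ i ∈ s, ¬q ∣ f i := by
  by_contra! hdvd
  exact hq (isUnit_of_dvd_one (h ▸ Finset.dvd_gcd hdvd))

namespace PadicInt

variable {p : ℕ} [Fact p.Prime]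

theorem isUnit_intCast_iff {k : ℤ} : IsUnit (k : ℤ_[p]) ↔ ¬(p : ℤ) ∣ k := by
  rw [← norm_int_lt_one_iff_dvd, ← not_isUnit_iff, not_not]

theorem norm_mul_lt_one_of_norm_lt_one {d : ℤ_[p]} (hd : ‖d‖ < 1) (x : ℤ_[p]) : ‖d * x‖ < 1 := by
  rw [norm_mul]
  exact (mul_le_of_le_one_right (norm_nonneg _) (norm_le_one x)).trans_lt hd

theorem isUnit_add_of_norm_lt_one {u s : ℤ_[p]} (hu : IsUnit u) (hs : ‖s‖ < 1) :
    IsUnit (u + s) := by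
  rw [isUnit_iff] at hu ⊢
  rw [norm_add_eq_max_of_ne (by linarith), hu, max_eq_left hs.le]

open Polynomial in
/-- Hensel's lemma, started at the root `b⁻¹ N` of the linear part. -/
theorem exists_mul_sq_add_mul_eq {d b : ℤ_[p]} (hd : ‖d‖ < 1) (hb : IsUnit b) (N : ℤ_[p]) :
    ∃ z, d * z ^ 2 + b * z = N := by
  obtain ⟨u, rfl⟩ := hb
  set F : ℤ_[p][X] := C d * X ^ 2 + C (u : ℤ_[p]) * X - C N
  set z₀ : ℤ_[p] := ↑u⁻¹ * N
  have hF : F.aeval z₀ = d * z₀ ^ 2 := by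
    simp only [F, z₀, map_sub, map_add, map_mul, aeval_C, aeval_X, map_pow, Algebra.algebraMap_self,
      RingHom.id_apply, Units.mul_inv_cancel_left, add_sub_cancel_right]
  have hF' : ‖F.derivative.aeval z₀‖ = 1 := by
    have : F.derivative.aeval z₀ = u + d * (2 * z₀) := by
      simp only [F, derivative_sub, derivative_mul, derivative_C, zero_mul,
        derivative_X_pow_succ, Nat.cast_one, map_add, map_one, pow_one, zero_add, derivative_X,
        mul_one, sub_zero, coe_aeval_eq_eval, eval_add, eval_mul, eval_C, eval_one, eval_X]
      ring
    rw [this, ← isUnit_iff]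
    exact isUnit_add_of_norm_lt_one u.isUnit (norm_mul_lt_one_of_norm_lt_one hd _)
  have hnorm : ‖F.aeval z₀‖ < ‖F.derivative.aeval z₀‖ ^ 2 := by
    rw [hF, hF', one_pow]
    exact norm_mul_lt_one_of_norm_lt_one hd _
  obtain ⟨z, hz, -⟩ := hensels_lemma hnorm
  exact ⟨z, by simpa [F, sub_eq_zero] using hz⟩

end PadicInt

theorem mgonal_universal_padic_odd_dvd_general (p : ℕ) [Fact p.Prime] (hp : Odd p)
    (m : ℤ) (hdvd : (p : ℤ) ∣ (m - 2))
    (n : ℕ) (a : Fin n → ℤ)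
    (hprim : Finset.univ.gcd a = 1) (N : ℤ_[p]) :
    ∃ x : Fin n → ℤ_[p],
      2 * N = ∑ i, (a i : ℤ_[p]) *
        (((m : ℤ_[p]) - 2) * ((x i) ^ 2 - x i) + 2 * x i) := by
  have hp' : Prime (p : ℤ) := Nat.prime_iff_prime_int.mp Fact.out
  obtain ⟨j, -, hj⟩ := Finset.exists_not_dvd_of_gcd_eq_one hprim hp'.not_isUnit
  have h4m : ¬(p : ℤ) ∣ 4 - m := fun h ↦ by
    have h2 : p ∣ 2 := by exact_mod_cast (show (p : ℤ) ∣ 2 by simpa using dvd_add h hdvd)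
    rw [(Nat.prime_dvd_prime_iff_eq Fact.out Nat.prime_two).mp h2] at hp
    exact absurd hp (by decide)
  obtain ⟨z, hz⟩ := PadicInt.exists_mul_sq_add_mul_eq (d := ((a j * (m - 2) : ℤ) : ℤ_[p]))
    (PadicInt.norm_int_lt_one_iff_dvd _ |>.mpr (hdvd.mul_left _))
    (PadicInt.isUnit_intCast_iff.mpr (hp'.not_dvd_mul hj h4m)) (2 * N)
  refine ⟨Pi.single j z, ?_⟩
  rw [Finset.sum_eq_single j (fun i _ hij ↦ by simp [hij]) (by simp), ← hz]
  push_cast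
  simp only [Pi.single_eq_same]
  ring

/-- Let `p` be an odd prime dividing `m-2` and let `a₁,…,aₙ` be positive integers
with `gcd(a₁,…,aₙ) = 1`. Then the `m`-gonal form `a₁P_m(x₁)+⋯+aₙP_m(xₙ)` is
universal over `ℤ_[p]`: every `N ∈ ℤ_[p]` is represented.  (Since `ℤ_[p]` is a
domain, `Σ aᵢ P_m(xᵢ) = N` is expressed by the equivalent doubled equation
`2N = Σ aᵢ ((m-2)(xᵢ²-xᵢ) + 2xᵢ)`, avoiding division by `2`.) -/
theorem mgonal_universal_padic_odd_dvd (p : ℕ) [Fact p.Prime] (hp : Odd p)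
    (m : ℤ) (hm : 3 ≤ m) (hdvd : (p : ℤ) ∣ (m - 2))
    (n : ℕ) (a : Fin n → ℤ) (ha : ∀ i, 0 < a i)
    (hprim : Finset.univ.gcd a = 1) (N : ℤ_[p]) :
    ∃ x : Fin n → ℤ_[p],
      2 * N = ∑ i, (a i : ℤ_[p]) *
        (((m : ℤ_[p]) - 2) * ((x i) ^ 2 - x i) + 2 * x i) :=
  mgonal_universal_padic_odd_dvd_general p hp m hdvd n a hprim N
end

section
/- If p is an odd prime with p | m-2, then for every N ∈ ℤ_p the equation P_m(x) = N has a solution x ∈ ℤ_p. -/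
/-!
Modulo `p` the polynomial `P_m` reduces to `x`, so at the starting point `x = N` the value
`P_m(N) - N = (m - 2)(N² - N)/2` is divisible by `p` while the derivative `1 + (m - 2)(N - 1/2)`
is a `p`-adic unit; Hensel's lemma then lifts `N` to an exact solution.
-/

open Polynomial

namespace PadicInt

variable {p : ℕ} [Fact p.Prime]

lemma norm_mul_lt_one_of_left {c : ℤ_[p]} (hc : ‖c‖ < 1) (z : ℤ_[p]) : ‖c * z‖ < 1 := by
  rw [norm_mul]
  exact lt_of_le_of_lt (mul_le_of_le_one_right (norm_nonneg c) (norm_le_one z)) hc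

lemma norm_add_units_eq_one {c : ℤ_[p]} (hc : ‖c‖ < 1) (u : ℤ_[p]ˣ) : ‖c + u‖ = 1 := by
  rw [norm_add_eq_max_of_ne (by rw [norm_units]; exact hc.ne), norm_units, max_eq_right hc.le]

/-- A polynomial congruent modulo `p` to a unit multiple of `X` is surjective on `ℤ_[p]`. -/
theorem exists_mul_eval_add_mul_eq (g : ℤ_[p][X]) {c : ℤ_[p]} (hc : ‖c‖ < 1) (u : ℤ_[p]ˣ)
    (b : ℤ_[p]) : ∃ x : ℤ_[p], c * g.eval x + u * x = b := by
  set a : ℤ_[p] := ↑u⁻¹ * b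
  set F : ℤ_[p][X] := C c * g + C (u : ℤ_[p]) * X - C b
  have hFa : F.eval a = c * g.eval a := by simp [F, a]
  have hF'a : ‖F.derivative.eval a‖ = 1 := by
    simpa [F] using norm_add_units_eq_one (norm_mul_lt_one_of_left hc (g.derivative.eval a)) u
  obtain ⟨x, hx, -⟩ := hensels_lemma (F := F) (a := a) <| by
    rw [coe_aeval_eq_eval, hF'a, hFa, one_pow]
    exact norm_mul_lt_one_of_left hc _
  refine ⟨x, ?_⟩
  simpa [F, sub_eq_zero] using hx

end PadicInt

theorem mgonal_single_universal_padic_general (p : ℕ) [Fact p.Prime] (hp : Odd p)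
    (m : ℤ) (hdvd : (p : ℤ) ∣ (m - 2)) (N : ℤ_[p]) :
    ∃ x : ℤ_[p], 2 * N = ((m : ℤ_[p]) - 2) * (x ^ 2 - x) + 2 * x := by
  have hm2 : ‖((m : ℤ_[p]) - 2)‖ < 1 := by
    simpa using PadicInt.norm_intCast_lt_one_iff.mpr hdvd
  have h2 : IsUnit (2 : ℤ_[p]) := by
    rw [PadicInt.isUnit_iff, ← Nat.cast_two, PadicInt.norm_natCast_eq_one_iff,
      Nat.coprime_two_right]
    exact hp
  obtain ⟨x, hx⟩ := PadicInt.exists_mul_eval_add_mul_eq (X ^ 2 - X) hm2 h2.unit (2 * N)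
  exact ⟨x, by simpa using hx.symm⟩

/-- If `p` is an odd prime with `p ∣ m-2`, then for every `N ∈ ℤ_[p]` the
equation `P_m(x) = N` has a solution `x ∈ ℤ_[p]` (stated via the equivalent
doubled equation `2N = (m-2)(x²-x) + 2x`). -/
theorem mgonal_single_universal_padic (p : ℕ) [Fact p.Prime] (hp : Odd p)
    (m : ℤ) (hm : 3 ≤ m) (hdvd : (p : ℤ) ∣ (m - 2)) (N : ℤ_[p]) :
    ∃ x : ℤ_[p], 2 * N = ((m : ℤ_[p]) - 2) * (x ^ 2 - x) + 2 * x :=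
  mgonal_single_universal_padic_general p hp m hdvd N
end

section
/- If m ≢ 0 (mod 4), then for every N ∈ ℤ_2 the equation P_m(x) = N has a 2-adic integer solution; in particular every primitive m-gonal form is universal over ℤ_2 when m ≢ 0 (mod 4). -/
open Polynomial

private lemma two_dvd_iff (x : ℤ_[2]) : (2 : ℤ_[2]) ∣ x ↔ PadicInt.toZMod x = 0 := by
  have h2 : ((2 : ℕ) : ℤ_[2]) = (2 : ℤ_[2]) := by norm_cast
  rw [← RingHom.mem_ker, PadicInt.ker_toZMod, PadicInt.maximalIdeal_eq_span_p,
    Ideal.mem_span_singleton, h2]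

private lemma two_dvd_or (N : ℤ_[2]) : (2 : ℤ_[2]) ∣ N ∨ (2 : ℤ_[2]) ∣ (N - 1) := by
  have h : ∀ r : ZMod 2, r = 0 ∨ r = 1 := by decide
  rcases h (PadicInt.toZMod N) with h0 | h1
  · exact Or.inl ((two_dvd_iff N).mpr h0)
  · refine Or.inr ((two_dvd_iff _).mpr ?_)
    rw [map_sub, h1, map_one, sub_self]

private lemma norm_eq_one_of_odd {k : ℤ} (hk : ¬ (2 ∣ k)) : ‖(k : ℤ_[2])‖ = 1 := by
  refine le_antisymm (PadicInt.norm_le_one _) (not_lt.mp fun h => hk ?_)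
  exact_mod_cast (PadicInt.norm_int_lt_one_iff_dvd k).mp h

private lemma norm_lt_of_two_dvd {x : ℤ_[2]} (hx : (2 : ℤ_[2]) ∣ x) : ‖x‖ < 1 :=
  (PadicInt.norm_lt_one_iff_dvd x).mpr (by exact_mod_cast hx)

/-- Core solvability: solve `b*x^2 - c*x - d = 0` in `ℤ_[2]` when `c` is odd
and `d` is even, via Hensel at `0`; plus the shifted variant. -/
private lemma solve_quad (b c : ℤ_[2]) (d : ℤ_[2]) (hc : ‖c‖ = 1) (hd : ‖d‖ < 1) :
    ∃ x : ℤ_[2], b * x ^ 2 - c * x - d = 0 := by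
  set F : Polynomial ℤ_[2] := C b * X ^ 2 - C c * X - C d with hF
  have hev : F.eval 0 = -d := by simp [hF]
  have hdv : F.derivative.eval 0 = -c := by
    simp [hF, derivative_sub, derivative_mul]
  have hnorm : ‖F.eval 0‖ < ‖F.derivative.eval 0‖ ^ 2 := by
    rw [hev, hdv, norm_neg, norm_neg, hc]; simpa using hd
  obtain ⟨z, hz, -⟩ := hensels_lemma hnorm
  refine ⟨z, ?_⟩
  simpa [hF] using hz

/-- If `m ≢ 0 (mod 4)`, every `N ∈ ℤ_[2]` satisfies `P_m(x) = N` for some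
`x ∈ ℤ_[2]` (stated via the doubled equation `2N = (m-2)(x²-x)+2x`); in
particular every primitive `m`-gonal form is universal over `ℤ_[2]`. -/
theorem mgonal_universal_two_adic (m : ℤ) (hm : 3 ≤ m) (hm4 : ¬ (4 ∣ m)) :
    (∀ N : ℤ_[2], ∃ x : ℤ_[2],
        2 * N = ((m : ℤ_[2]) - 2) * (x ^ 2 - x) + 2 * x) ∧
    (∀ (n : ℕ) (a : Fin n → ℤ), (∀ i, 0 < a i) → Finset.univ.gcd a = 1 →
      ∀ N : ℤ_[2], ∃ x : Fin n → ℤ_[2],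
        2 * N = ∑ i, (a i : ℤ_[2]) *
          (((m : ℤ_[2]) - 2) * ((x i) ^ 2 - x i) + 2 * x i)) := by
  have key : ∀ N : ℤ_[2], ∃ x : ℤ_[2],
      2 * N = ((m : ℤ_[2]) - 2) * (x ^ 2 - x) + 2 * x := by
    intro N
    by_cases hodd : 2 ∣ m
    · -- m ≡ 2 mod 4 : m = 2k, with k odd-shifted; m-2 = 2u, m-4 = 2v, u,v odd
      obtain ⟨k, hk⟩ := hodd
      have hv : ¬ (2 ∣ (k - 2)) := by omega
      -- solve (k-1) x^2 - (k-2) x - N' = 0 where N' ∈ {N, shifted}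
      have hvnorm : ‖((k - 2 : ℤ) : ℤ_[2])‖ = 1 := norm_eq_one_of_odd hv
      rcases two_dvd_or N with hN | hN
      · obtain ⟨x, hx⟩ := solve_quad ((k - 1 : ℤ) : ℤ_[2]) ((k - 2 : ℤ) : ℤ_[2]) N
          hvnorm (norm_lt_of_two_dvd hN)
        refine ⟨x, ?_⟩
        have hm2 : ((m : ℤ_[2]) - 2) = 2 * ((k - 1 : ℤ) : ℤ_[2]) := by
          have : (m : ℤ) = 2 * k := hk
          push_cast [this]; ring
        rw [hm2]
        have h2 : ((k - 2 : ℤ) : ℤ_[2]) = ((k - 1 : ℤ) : ℤ_[2]) - 1 := by push_cast; ring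
        linear_combination -2 * hx - 2 * x * h2
      · -- shift: use x₀ = 1 + y doesn't matter; solve with constant N - (u - v) where u - v = 1
        have hcn : ‖(((k - 2 : ℤ) : ℤ_[2]) - 2 * ((k - 1 : ℤ) : ℤ_[2]))‖ = 1 := by
          have heq : (((k - 2 : ℤ) : ℤ_[2]) - 2 * ((k - 1 : ℤ) : ℤ_[2])) = ((k - 2 - 2*(k-1) : ℤ) : ℤ_[2]) := by
            push_cast; ring
          rw [heq]
          exact norm_eq_one_of_odd (by omega)
        obtain ⟨x, hx⟩ := solve_quad ((k - 1 : ℤ) : ℤ_[2]) (((k - 2 : ℤ) : ℤ_[2]) - 2 * ((k - 1 : ℤ) : ℤ_[2]))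
          (N - 1) hcn (norm_lt_of_two_dvd hN)
        refine ⟨1 + x, ?_⟩
        have hm2 : ((m : ℤ_[2]) - 2) = 2 * ((k - 1 : ℤ) : ℤ_[2]) := by
          have : (m : ℤ) = 2 * k := hk
          push_cast [this]; ring
        have h2 : ((k - 2 : ℤ) : ℤ_[2]) = ((k - 1 : ℤ) : ℤ_[2]) - 1 := by push_cast; ring
        rw [hm2]
        linear_combination -2 * hx - 2 * x * h2
    · -- m odd: F = (m-2) x^2 - (m-4) x - 2N, deriv at 0 is odd
      obtain ⟨x, hx⟩ := solve_quad ((m - 2 : ℤ) : ℤ_[2]) ((m - 4 : ℤ) : ℤ_[2]) (2 * N)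
        (norm_eq_one_of_odd (by omega)) (norm_lt_of_two_dvd ⟨N, rfl⟩)
      refine ⟨x, ?_⟩
      have h2 : ((m - 2 : ℤ) : ℤ_[2]) = (m : ℤ_[2]) - 2 := by push_cast; ring
      have h4 : ((m - 4 : ℤ) : ℤ_[2]) = ((m - 2 : ℤ) : ℤ_[2]) - 2 := by push_cast; ring
      rw [← h2]
      linear_combination -hx - x * h4
  refine ⟨key, ?_⟩
  intro n a ha hgcd N
  have hodd : ∃ i, ¬ (2 ∣ a i) := by
    by_contra h
    push_neg at h
    have : (2 : ℤ) ∣ Finset.univ.gcd a := Finset.dvd_gcd fun i _ => h i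
    rw [hgcd] at this
    omega
  obtain ⟨i, hi⟩ := hodd
  have hunit : IsUnit ((a i : ℤ_[2])) := PadicInt.isUnit_iff.mpr (norm_eq_one_of_odd hi)
  obtain ⟨u, hu⟩ := hunit
  obtain ⟨x₀, hx₀⟩ := key ((↑u⁻¹ : ℤ_[2]) * N)
  refine ⟨fun j => if j = i then x₀ else 0, ?_⟩
  rw [Finset.sum_eq_single i]
  · simp only []
    rw [if_pos trivial, ← hu, ← hx₀]
    calc (2 : ℤ_[2]) * N = (↑u * ↑u⁻¹) * (2 * N) := by
          rw [u.mul_inv]; ring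
      _ = ↑u * (2 * ((↑u⁻¹ : ℤ_[2]) * N)) := by ring
  · intro j _ hj
    simp [hj]
  · intro h
    exact absurd (Finset.mem_univ i) h
end

section
/- Let q ∈ ℚ_2 with ord_2(q) < -1. Then the set {(z - q)^2 : z ∈ ℤ_2} equals 2q·ℤ_2 + q^2. If instead ord_2(q) = -1, then {(z - q)^2 : z ∈ ℤ_2} = 4q·ℤ_2 + q^2. -/
/-! Expand `(z - q)² = q² + z (z - 2q)`. If `‖2q‖ > 1`, then `z (z - 2q) = 2q (c z² - z)` with
`c = (2q)⁻¹ ∈ 2ℤ₂`, and `z ↦ c z² - z` maps `ℤ₂` onto itself: `z = c z² - t` is the fixed point of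
a contraction. If `u = 2q` is a unit, `z (z - u)` is even since `z` or `z - u` is, and conversely
`z = u + 2v` turns `z (z - u) = 2u t` into an equation `v = t - 2u⁻¹ v²` of the same kind. -/

namespace PadicInt

variable {p : ℕ} [Fact p.Prime]

theorem exists_mul_sq_sub_eq {c : ℤ_[p]} (hc : ‖c‖ < 1) (t : ℤ_[p]) :
    ∃ z : ℤ_[p], c * z ^ 2 - z = t := by
  set f : ℤ_[p] → ℤ_[p] := fun z ↦ c * z ^ 2 - t
  have hf : ContractingWith ‖c‖₊ f := by
    refine ⟨hc, LipschitzWith.of_dist_le_mul fun x y ↦ ?_⟩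
    have hfxy : f x - f y = c * (x + y) * (x - y) := by ring
    rw [dist_eq_norm, dist_eq_norm, hfxy, norm_mul, norm_mul, coe_nnnorm]
    gcongr
    exact mul_le_of_le_one_right (norm_nonneg c) (norm_le_one _)
  have hfix : f (hf.fixedPoint f) = hf.fixedPoint f := hf.fixedPoint_isFixedPt
  exact ⟨hf.fixedPoint f, by linear_combination hfix⟩

theorem two_dvd_mul_sub_of_isUnit {u : ℤ_[2]} (hu : IsUnit u) (z : ℤ_[2]) :
    2 ∣ z * (z - u) := by
  have hu1 : toZMod u = 1 := by
    have := hu.map toZMod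
    generalize toZMod u = x at this
    fin_cases x
    · exact absurd this not_isUnit_zero
    · rfl
  have hker : z * (z - u) ∈ RingHom.ker (toZMod : ℤ_[2] →+* ZMod 2) := by
    rw [RingHom.mem_ker, map_mul, map_sub, hu1]
    generalize toZMod z = x
    fin_cases x <;> decide
  rw [ker_toZMod, maximalIdeal_eq_span_p, Ideal.mem_span_singleton] at hker
  exact_mod_cast hker

theorem range_mul_sub_eq_of_isUnit {u : ℤ_[2]} (hu : IsUnit u) :
    Set.range (fun z : ℤ_[2] ↦ z * (z - u)) = Set.range (fun t : ℤ_[2] ↦ 2 * u * t) := by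
  obtain ⟨u, rfl⟩ := hu
  ext y
  constructor
  · rintro ⟨z, rfl⟩
    obtain ⟨s, hs⟩ := two_dvd_mul_sub_of_isUnit u.isUnit z
    refine ⟨s * ↑u⁻¹, ?_⟩
    dsimp only
    linear_combination -hs + 2 * s * u.mul_inv
  · rintro ⟨t, rfl⟩
    have hc : ‖-2 * (↑u⁻¹ : ℤ_[2])‖ < 1 := by
      rw [norm_mul, norm_neg, isUnit_iff.mp u⁻¹.isUnit, mul_one, norm_lt_one_iff_dvd]
      exact_mod_cast dvd_rfl
    obtain ⟨v, hv⟩ := exists_mul_sq_sub_eq hc (-t)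
    refine ⟨u + 2 * v, ?_⟩
    linear_combination (-2 * (u : ℤ_[2])) * hv - (4 * v ^ 2) * u.mul_inv

end PadicInt

namespace Padic

variable {p : ℕ} [Fact p.Prime]

theorem setOf_sub_sq_eq_of_range_eq {q a : ℚ_[p]}
    (h : Set.range (fun z : ℤ_[p] ↦ (z : ℚ_[p]) * (z - 2 * q)) =
      Set.range (fun t : ℤ_[p] ↦ a * t)) :
    {y : ℚ_[p] | ∃ z : ℤ_[p], y = ((z : ℚ_[p]) - q) ^ 2} =
      {y : ℚ_[p] | ∃ t : ℤ_[p], y = a * (t : ℚ_[p]) + q ^ 2} := by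
  have hsq : ∀ z : ℚ_[p], (z - q) ^ 2 = z * (z - 2 * q) + q ^ 2 := fun z ↦ by ring
  ext y
  simp only [Set.mem_ofPred_eq, hsq]
  constructor
  · rintro ⟨z, rfl⟩
    obtain ⟨t, ht⟩ : ∃ t : ℤ_[p], a * t = z * (z - 2 * q) := h.subset ⟨z, rfl⟩
    exact ⟨t, by rw [ht]⟩
  · rintro ⟨t, rfl⟩
    obtain ⟨z, hz⟩ : ∃ z : ℤ_[p], (z : ℚ_[p]) * (z - 2 * q) = a * t := h.superset ⟨t, rfl⟩
    exact ⟨z, by rw [hz]⟩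

theorem range_mul_sub_eq_of_one_lt_norm {b : ℚ_[p]} (hb : 1 < ‖b‖) :
    Set.range (fun z : ℤ_[p] ↦ (z : ℚ_[p]) * (z - b)) = Set.range (fun t : ℤ_[p] ↦ b * t) := by
  have hb0 : b ≠ 0 := norm_pos_iff.mp (one_pos.trans hb)
  set c : ℤ_[p] := ⟨b⁻¹, by rw [norm_inv]; exact inv_le_one_of_one_le₀ hb.le⟩
  have hc : (c : ℚ_[p]) = b⁻¹ := rfl
  have hbc : ∀ z : ℤ_[p], (z : ℚ_[p]) * (z - b) = b * ↑(c * z ^ 2 - z) := fun z ↦ by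
    push_cast [hc]; field_simp
  ext y
  constructor
  · rintro ⟨z, rfl⟩
    exact ⟨c * z ^ 2 - z, (hbc z).symm⟩
  · rintro ⟨t, rfl⟩
    have hcn : ‖c‖ < 1 := by
      rw [PadicInt.norm_def, hc, norm_inv]; exact inv_lt_one_of_one_lt₀ hb
    obtain ⟨z, rfl⟩ := PadicInt.exists_mul_sq_sub_eq hcn t
    exact ⟨z, hbc z⟩

theorem range_mul_sub_eq_of_norm_eq_one {b : ℚ_[2]} (hb : ‖b‖ = 1) :
    Set.range (fun z : ℤ_[2] ↦ (z : ℚ_[2]) * (z - b)) =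
      Set.range (fun t : ℤ_[2] ↦ 2 * b * t) := by
  obtain ⟨u, rfl⟩ : ∃ u : ℤ_[2], (u : ℚ_[2]) = b := ⟨⟨b, hb.le⟩, rfl⟩
  have h := PadicInt.range_mul_sub_eq_of_isUnit (PadicInt.isUnit_iff.mpr hb)
  ext y
  constructor
  · rintro ⟨z, rfl⟩
    obtain ⟨t, ht⟩ : ∃ t, 2 * u * t = z * (z - u) := h.subset ⟨z, rfl⟩
    exact ⟨t, congrArg Subtype.val ht⟩
  · rintro ⟨t, rfl⟩
    obtain ⟨z, hz⟩ : ∃ z, z * (z - u) = 2 * u * t := h.superset ⟨t, rfl⟩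
    exact ⟨z, congrArg Subtype.val hz⟩

theorem norm_two_mul {q : ℚ_[2]} (hq : q ≠ 0) : ‖2 * q‖ = 2 ^ (-(q.valuation + 1)) := by
  have h2 : ‖(2 : ℚ_[2])‖ = 2⁻¹ := by exact_mod_cast norm_p (p := 2)
  rw [norm_mul, norm_eq_zpow_neg_valuation hq, h2, neg_add, zpow_add₀ two_ne_zero,
    zpow_neg_one, mul_comm]
  norm_num

end Padic

/-- For `q ∈ ℚ_[2]`: if `ord₂(q) < -1` then
`{(z-q)² : z ∈ ℤ_[2]} = 2q·ℤ_[2] + q²`, and if `ord₂(q) = -1` then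
`{(z-q)² : z ∈ ℤ_[2]} = 4q·ℤ_[2] + q²`. -/
theorem translated_squares_two_adic (q : ℚ_[2]) :
    (q.valuation < -1 →
      {y : ℚ_[2] | ∃ z : ℤ_[2], y = ((z : ℚ_[2]) - q) ^ 2} =
        {y : ℚ_[2] | ∃ t : ℤ_[2], y = 2 * q * (t : ℚ_[2]) + q ^ 2}) ∧
    (q.valuation = -1 →
      {y : ℚ_[2] | ∃ z : ℤ_[2], y = ((z : ℚ_[2]) - q) ^ 2} =
        {y : ℚ_[2] | ∃ t : ℤ_[2], y = 4 * q * (t : ℚ_[2]) + q ^ 2}) := by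
  have hq : q.valuation ≠ 0 → q ≠ 0 := fun hv hq ↦ hv (hq ▸ Padic.valuation_zero)
  constructor <;> intro hv <;> apply Padic.setOf_sub_sq_eq_of_range_eq
  · apply Padic.range_mul_sub_eq_of_one_lt_norm
    rw [Padic.norm_two_mul (hq (by omega))]
    exact one_lt_zpow₀ one_lt_two (by omega)
  · rw [show (4 : ℚ_[2]) * q = 2 * (2 * q) by ring]
    apply Padic.range_mul_sub_eq_of_norm_eq_one
    rw [Padic.norm_two_mul (hq (by omega)), hv]
    norm_num
end

section
/- For m ≡ 0 (mod 4), m > 8, the m-gonal form P_m(x_1)+P_m(x_2)+P_m(x_3)+P_m(x_4) is locally universal (represents every positive integer over every ℤ_p) but is not almost universal: infinitely many positive integers are not represented over ℤ. -/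
/-!
Write `m = 4 (b + 1)` and `a = 2 b + 1 = (m - 2) / 2`. Completing the square,
`a P_m(x) = (a x - b)² - b²`, so `∑ P_m(xᵢ) = N` amounts to `∑ (a xᵢ - b)² = a N + 4 b²`.

Over `ℤ_[p]` with `p ∤ a`, write `a N + 4 b²` as a sum of four integer squares (Lagrange) and
solve `a xᵢ - b = zᵢ`. If `p ∣ a`, then `P_m(x) ≡ x (mod p)`, and Hensel's lemma started at
`x = N` solves `P_m(x) = N` in a single variable.

Over `ℤ`, take `N` with `a N + 4 b² = 4ⁿ · 2 d`, `d` odd and `d < 2 a`; such `N` exist for all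
large `n` because `2` is invertible mod `a`. The `zᵢ = a xᵢ - b` are pairwise congruent mod `a`.
A sum of four squares divisible by `8` has even terms, so halving the `zᵢ` `n` times keeps them pairwise
congruent mod the odd `a` and brings their squares' sum down to `2 d`. Then `a² ≤ 2 d < 4 a`,
which fails for `a ≥ 5`, i.e. `m > 8`.
-/

/-- The `x`-th generalized `m`-gonal number. -/
def polyP (m x : ℤ) : ℤ := (m - 2) * (x ^ 2 - x) / 2 + x

/-- `polygonal a x = P_{2a+2}(x)`, over any commutative ring. -/
def polygonal {R : Type*} [CommRing R] (a x : R) : R := a * (x ^ 2 - x) + x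

@[simp]
theorem polygonal_zero {R : Type*} [CommRing R] (a : R) : polygonal a 0 = 0 := by simp [polygonal]

theorem mul_polygonal {R : Type*} [CommRing R] (b x : R) :
    (2 * b + 1) * polygonal (2 * b + 1) x = ((2 * b + 1) * x - b) ^ 2 - b ^ 2 := by
  unfold polygonal; ring

theorem polyP_four_mul_add_one (b x : ℤ) : polyP (4 * (b + 1)) x = polygonal (2 * b + 1) x := by
  rw [polyP, polygonal,
    show (4 * (b + 1) - 2) * (x ^ 2 - x) = 2 * ((2 * b + 1) * (x ^ 2 - x)) by ring,
    Int.mul_ediv_cancel_left _ two_ne_zero]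

open Polynomial in
theorem PadicInt.exists_polygonal_eq_of_norm_lt_one {p : ℕ} [Fact p.Prime] {α : ℤ_[p]}
    (hα : ‖α‖ < 1) (N : ℤ_[p]) : ∃ x, polygonal α x = N := by
  set F : ℤ_[p][X] := C α * X ^ 2 + C (1 - α) * X - C N
  have hF : ∀ x, F.aeval x = polygonal α x - N := fun x => by simp [F, polygonal]; ring
  have hF' : F.derivative.aeval N = 1 + α * (2 * N - 1) := by
    simp [F]; ring
  have hFN : ‖F.aeval N‖ < 1 := by
    rw [hF, show polygonal α N - N = N * (N - 1) * α by unfold polygonal; ring]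
    exact norm_lt_one_mul hα
  have hF'N : ‖F.derivative.aeval N‖ = 1 := by
    have : ‖α * (2 * N - 1)‖ < ‖(1 : ℤ_[p])‖ := by
      rw [mul_comm, norm_one]; exact norm_lt_one_mul hα
    rw [hF', IsUltrametricDist.norm_add_eq_max_of_norm_ne_norm this.ne', max_eq_left this.le,
      norm_one]
  obtain ⟨x, hx, -⟩ := hensels_lemma (F := F) (a := N) (by rw [hF'N]; simpa using hFN)
  exact ⟨x, sub_eq_zero.mp ((hF x).symm.trans hx)⟩

theorem exists_sum_polygonal_eq_of_isUnit {R : Type*} [CommRing R] {b : R}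
    (hb : IsUnit (2 * b + 1)) {N : R} {z : Fin 4 → R}
    (hz : ∑ i, z i ^ 2 = (2 * b + 1) * N + 4 * b ^ 2) :
    ∃ x : Fin 4 → R, ∑ i, polygonal (2 * b + 1) (x i) = N := by
  obtain ⟨c, hc⟩ := hb.exists_right_inv
  refine ⟨fun i => c * (z i + b), hb.mul_left_cancel ?_⟩
  have hx : ∀ i, (2 * b + 1) * (c * (z i + b)) - b = z i := fun i => by
    linear_combination (z i + b) * hc
  simp only [Finset.mul_sum, mul_polygonal, hx, Finset.sum_sub_distrib, hz, Finset.sum_const,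
    Finset.card_univ, Fintype.card_fin, nsmul_eq_mul]
  ring

theorem PadicInt.exists_sum_polygonal_eq {p : ℕ} [Fact p.Prime] {b N : ℤ} (hb : 0 ≤ b)
    (hN : 0 ≤ N) :
    ∃ x : Fin 4 → ℤ_[p], ∑ i, polygonal (2 * b + 1 : ℤ_[p]) (x i) = N := by
  rcases (norm_le_one (2 * b + 1 : ℤ_[p])).lt_or_eq with hlt | hone
  · obtain ⟨x, hx⟩ := exists_polygonal_eq_of_norm_lt_one hlt N
    exact ⟨![x, 0, 0, 0], by simp [Fin.sum_univ_four, hx]⟩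
  · obtain ⟨M, hM⟩ : ∃ M : ℕ, (M : ℤ) = (2 * b + 1) * N + 4 * b ^ 2 :=
      ⟨_, Int.toNat_of_nonneg (by positivity)⟩
    obtain ⟨z₀, z₁, z₂, z₃, hz⟩ := Nat.sum_four_squares M
    have hsum : ((z₀ ^ 2 + z₁ ^ 2 + z₂ ^ 2 + z₃ ^ 2 : ℕ) : ℤ) = (2 * b + 1) * N + 4 * b ^ 2 := by
      rw [hz, hM]
    refine exists_sum_polygonal_eq_of_isUnit (isUnit_iff.mpr hone) (z := ![z₀, z₁, z₂, z₃]) ?_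
    simpa [Fin.sum_univ_four] using congrArg (Int.cast : ℤ → ℤ_[p]) hsum

namespace Int

theorem emod_two_and_sq_emod (x : ℤ) :
    (x % 2 = 0 ∧ x ^ 2 % 4 = 0) ∨ (x % 2 = 1 ∧ x ^ 2 % 8 = 1) := by
  rcases Int.even_or_odd' x with ⟨k, rfl | rfl⟩
  · left
    constructor
    · omega
    · rw [show (2 * k) ^ 2 = 4 * k ^ 2 by ring]; omega
  · right
    obtain ⟨j, hj⟩ := Int.even_mul_succ_self k
    constructor
    · omega
    · rw [show (2 * k + 1) ^ 2 = 4 * (k * (k + 1)) + 1 by ring]; omega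

theorem two_dvd_of_eight_dvd_sum_four_sq {z : Fin 4 → ℤ} (h : 8 ∣ ∑ i, z i ^ 2) (i : Fin 4) :
    2 ∣ z i := by
  rw [Fin.sum_univ_four] at h
  rcases emod_two_and_sq_emod (z 0) with h0 | h0 <;>
  rcases emod_two_and_sq_emod (z 1) with h1 | h1 <;>
  rcases emod_two_and_sq_emod (z 2) with h2 | h2 <;>
  rcases emod_two_and_sq_emod (z 3) with h3 | h3 <;>
  fin_cases i <;> simp only [Fin.zero_eta, Fin.mk_one, Fin.reduceFinMk] <;> omega

theorem sq_le_two_mul_add_sq_of_dvd_sub {a x y : ℤ} (hdvd : a ∣ x - y) (hodd : (x - y) % 2 = 1) :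
    a ^ 2 ≤ 2 * (x ^ 2 + y ^ 2) := by
  have hne : x - y ≠ 0 := by omega
  have hle : a ^ 2 ≤ (x - y) ^ 2 := natAbs_le_iff_sq_le.mp (natAbs_le_of_dvd_ne_zero hdvd hne)
  nlinarith [sq_nonneg (x + y)]

/-- Exactly two of the `w i` are odd; pairing each with an even one gives two odd, hence nonzero,
differences divisible by `a`. -/
theorem sq_le_of_sum_four_sq_eq_two_mul {a d : ℤ} {w : Fin 4 → ℤ} (hw : ∀ i j, a ∣ w i - w j)
    (hd : d % 2 = 1) (hsum : ∑ i, w i ^ 2 = 2 * d) : a ^ 2 ≤ 2 * d := by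
  rw [Fin.sum_univ_four] at hsum
  have hpairs : ((w 0 - w 1) % 2 = 1 ∧ (w 2 - w 3) % 2 = 1) ∨
      ((w 0 - w 2) % 2 = 1 ∧ (w 1 - w 3) % 2 = 1) := by
    rcases emod_two_and_sq_emod (w 0) with h0 | h0 <;>
    rcases emod_two_and_sq_emod (w 1) with h1 | h1 <;>
    rcases emod_two_and_sq_emod (w 2) with h2 | h2 <;>
    rcases emod_two_and_sq_emod (w 3) with h3 | h3 <;>
    omega
  rcases hpairs with ⟨h01, h23⟩ | ⟨h02, h13⟩
  · linarith [sq_le_two_mul_add_sq_of_dvd_sub (hw 0 1) h01,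
      sq_le_two_mul_add_sq_of_dvd_sub (hw 2 3) h23]
  · linarith [sq_le_two_mul_add_sq_of_dvd_sub (hw 0 2) h02,
      sq_le_two_mul_add_sq_of_dvd_sub (hw 1 3) h13]

theorem sq_le_of_sum_four_sq_eq_four_pow_mul {a d : ℤ} (ha : Odd a) (hd : d % 2 = 1) (n : ℕ)
    {z : Fin 4 → ℤ} (hz : ∀ i j, a ∣ z i - z j) (hsum : ∑ i, z i ^ 2 = 4 ^ n * (2 * d)) :
    a ^ 2 ≤ 2 * d := by
  induction n generalizing z with
  | zero => exact sq_le_of_sum_four_sq_eq_two_mul hz hd (by simpa using hsum)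
  | succ n ih =>
    have h8 : 8 ∣ ∑ i, z i ^ 2 := ⟨4 ^ n * d, by rw [hsum, pow_succ]; ring⟩
    choose w hw using two_dvd_of_eight_dvd_sum_four_sq h8
    refine ih (z := w) (fun i j => ?_) ?_
    · refine (isCoprime_two_right.mpr ha).dvd_of_dvd_mul_left ?_
      rw [mul_sub, ← hw, ← hw]
      exact hz i j
    · have : ∑ i, z i ^ 2 = 4 * ∑ i, w i ^ 2 := by
        simp only [hw, Finset.mul_sum, mul_pow]; norm_num
      rw [pow_succ] at hsum
      linarith
theorem exists_odd_lt_two_mul_dvd_sub {a : ℤ} (ha : Odd a) (ha0 : 0 < a) (r : ℤ) :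
    ∃ d, d % 2 = 1 ∧ 0 < d ∧ d < 2 * a ∧ a ∣ d - r := by
  have hr : a ∣ r % a - r := ⟨-(r / a), by rw [emod_def]; ring⟩
  have h0 := emod_nonneg r ha0.ne'
  have h1 := emod_lt_of_pos r ha0
  have ha2 := odd_iff.mp ha
  by_cases ht : r % a % 2 = 1
  · exact ⟨r % a, ht, by omega, by omega, hr⟩
  · refine ⟨r % a + a, by omega, by omega, by omega, ?_⟩
    simpa [add_sub_right_comm] using hr.add (dvd_refl a)

end Int

theorem exists_gt_mul_add_sq_eq_four_pow_mul {b : ℤ} (hb : 0 ≤ b) (T : ℤ) :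
    ∃ N d : ℤ, ∃ n : ℕ, T < N ∧ d % 2 = 1 ∧ d < 2 * (2 * b + 1) ∧
      (2 * b + 1) * N + 4 * b ^ 2 = 4 ^ n * (2 * d) := by
  obtain ⟨n, hn⟩ :=
    pow_unbounded_of_one_lt ((2 * b + 1) * T + 4 * b ^ 2) (by norm_num : (1 : ℤ) < 4)
  obtain ⟨d, hd, hd0, hda, hdr⟩ :=
    Int.exists_odd_lt_two_mul_dvd_sub (odd_two_mul_add_one b) (by omega) ((b + 1) ^ (2 * n + 1))
  -- `2 * (b + 1) ≡ 1` and `4 * b ^ 2 ≡ 1` modulo `2 * b + 1`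
  have hdvd : 2 * b + 1 ∣ 4 ^ n * (2 * d) - 4 * b ^ 2 := by
    have hpow := sub_dvd_pow_sub_pow (2 * (b + 1)) 1 (2 * n + 1)
    rw [show 2 * (b + 1) - 1 = 2 * b + 1 by ring, one_pow, mul_pow, pow_succ, pow_mul] at hpow
    have hsq : 2 * b + 1 ∣ 1 - 4 * b ^ 2 := ⟨1 - 2 * b, by ring⟩
    rw [show 4 ^ n * (2 * d) - 4 * b ^ 2 = 2 * 4 ^ n * (d - (b + 1) ^ (2 * n + 1))
      + ((2 ^ 2) ^ n * 2 * (b + 1) ^ (2 * n + 1) - 1) + (1 - 4 * b ^ 2) by ring]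
    exact ((hdr.mul_left _).add hpow).add hsq
  obtain ⟨N, hN⟩ := hdvd
  refine ⟨N, d, n, ?_, hd, hda, by linarith⟩
  have h4n : (0 : ℤ) < 4 ^ n := by positivity
  have : (2 * b + 1) * T < (2 * b + 1) * N := by nlinarith
  exact lt_of_mul_lt_mul_left this (by omega)

theorem not_exists_sum_polygonal_eq {b d N : ℤ} (hb : 2 ≤ b) (hd : d % 2 = 1)
    (hda : d < 2 * (2 * b + 1)) (n : ℕ) (hN : (2 * b + 1) * N + 4 * b ^ 2 = 4 ^ n * (2 * d)) :
    ¬ ∃ x : Fin 4 → ℤ, ∑ i, polygonal (2 * b + 1) (x i) = N := by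
  rintro ⟨x, hx⟩
  have hsq : ∀ i, ((2 * b + 1) * x i - b) ^ 2 = (2 * b + 1) * polygonal (2 * b + 1) (x i) + b ^ 2 :=
    fun i => by rw [mul_polygonal]; ring
  have hsum : ∑ i, ((2 * b + 1) * x i - b) ^ 2 = 4 ^ n * (2 * d) := by
    rw [Fin.sum_univ_four] at hx ⊢
    simp only [hsq]
    linear_combination (2 * b + 1) * hx + hN
  have := Int.sq_le_of_sum_four_sq_eq_four_pow_mul (odd_two_mul_add_one b) hd n
    (fun i j => ⟨x i - x j, by ring⟩) hsum
  nlinarith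

/-- For `m ≡ 0 (mod 4)` with `m > 8`, the form `P_m(x₁)+P_m(x₂)+P_m(x₃)+P_m(x₄)`
is locally universal (every positive integer is represented over every `ℤ_[p]`,
stated via the doubled equation) but not almost universal: infinitely many
positive integers are not represented over `ℤ`. -/
theorem four_ones_locally_universal_not_almost_universal (m : ℤ)
    (hm4 : 4 ∣ m) (hm : 8 < m) :
    (∀ N : ℤ, 0 < N → ∀ (p : ℕ) (_ : Fact p.Prime),
      ∃ x : Fin 4 → ℤ_[p],
        2 * (N : ℤ_[p]) =
          ∑ i, (((m : ℤ_[p]) - 2) * ((x i) ^ 2 - x i) + 2 * x i)) ∧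
    {N : ℤ | 0 < N ∧ ¬ ∃ x : Fin 4 → ℤ, ∑ i, polyP m (x i) = N}.Infinite := by
  obtain ⟨b, rfl⟩ : ∃ b, m = 4 * (b + 1) := ⟨m / 4 - 1, by omega⟩
  constructor
  · intro N hN p _
    obtain ⟨x, hx⟩ := PadicInt.exists_sum_polygonal_eq (p := p) (b := b) (by omega) hN.le
    refine ⟨x, ?_⟩
    rw [← hx, Finset.mul_sum]
    refine Finset.sum_congr rfl fun i _ => ?_
    push_cast
    unfold polygonal
    ring
  · refine Set.infinite_of_forall_exists_gt fun T => ?_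
    obtain ⟨N, d, n, hTN, hd, hda, hN⟩ :=
      exists_gt_mul_add_sq_eq_four_pow_mul (b := b) (by omega) (max T 0)
    refine ⟨N, ⟨by omega, ?_⟩, by omega⟩
    simpa only [polyP_four_mul_add_one] using not_exists_sum_polygonal_eq (by omega) hd hda n hN
end
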